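/- Define a = 8 + λh²/5, b = -16 + 8λh²/5, c = -1 - λh²/10, d = 14 - 4λh²/5 for positive reals λ and h, and consider the eigenvalues λ₃,₄ = (-2a² - bd ± √(b(2c+d)(4a² - 2bc + bd)))/(2(a² - bc)) of the amplification matrix of the two-step recursion. If λh² < 10, then the two nonzero eigenvalues satisfy |Re(λ₃)| < 1 and |Re(λ₄)| < 1 whenever a² - bc ≠ 0. -/

import Mathlib

lemma cpow_half_re_of_neg {r : ℝ} (hr : r < 0) :
    (((r : ℂ)) ^ (1 / 2 : ℂ)).re = 0 := by
  rw [show (1 / 2 : ℂ) = (2⁻¹ : ℂ) by norm_num, Complex.cpow_inv_two_re]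
  simp [Complex.norm_real, Real.norm_eq_abs, abs_of_neg hr]

theorem stmt_17 (lam h : ℝ) (hlam : 0 < lam) (hh : 0 < h)
    (hcfl : lam * h ^ 2 < 10) :
    let a : ℝ := 8 + lam * h ^ 2 / 5
    let b : ℝ := -16 + 8 * lam * h ^ 2 / 5
    let c : ℝ := -1 - lam * h ^ 2 / 10
    let d : ℝ := 14 - 4 * lam * h ^ 2 / 5
    a ^ 2 - b * c ≠ 0 →
      |(((((-2 * a ^ 2 - b * d : ℝ) : ℂ) +
            ((b * (2 * c + d) * (4 * a ^ 2 - 2 * b * c + b * d) : ℝ) : ℂ) ^ (1 / 2 : ℂ)) /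
          ((2 * (a ^ 2 - b * c) : ℝ) : ℂ)).re)| < 1 ∧
      |(((((-2 * a ^ 2 - b * d : ℝ) : ℂ) -
            ((b * (2 * c + d) * (4 * a ^ 2 - 2 * b * c + b * d) : ℝ) : ℂ) ^ (1 / 2 : ℂ)) /
          ((2 * (a ^ 2 - b * c) : ℝ) : ℂ)).re)| < 1 := by
  intro a b c d _
  set x : ℝ := lam * h ^ 2 with hx
  have hx0 : 0 < x := by positivity
  have hr : b * (2 * c + d) * (4 * a ^ 2 - 2 * b * c + b * d) < 0 := by
    have : b * (2 * c + d) * (4 * a ^ 2 - 2 * b * c + b * d)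
        = 32 / 25 * x * (x - 10) * (x - 12) * (x - 60) := by
      simp only [a, b, c, d]; ring
    rw [this]
    nlinarith [mul_pos (mul_pos hx0 (by linarith : (0:ℝ) < 10 - x))
      (by linarith : (0:ℝ) < 12 - x), (by linarith : (0:ℝ) < 60 - x)]
  have hre0 := cpow_half_re_of_neg hr
  have hD : 0 < 2 * (a ^ 2 - b * c) := by
    have : 2 * (a ^ 2 - b * c) = 96 + 32 * x / 5 + 2 * x ^ 2 / 5 := by
      simp only [a, b, c]; ring
    rw [this]; positivity
  have hbound : |(-2 * a ^ 2 - b * d) / (2 * (a ^ 2 - b * c))| < 1 := by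
    rw [abs_div, abs_of_pos hD, div_lt_one hD, abs_lt]
    constructor
    · have : -(2 * (a ^ 2 - b * c)) - (-2 * a ^ 2 - b * d)
          = -(8 / 5) * ((x - 10) * (x - 12)) := by simp only [a, b, c, d]; ring
      nlinarith [mul_pos (by linarith : (0:ℝ) < 10 - x) (by linarith : (0:ℝ) < 12 - x)]
    · nlinarith [hx0, hcfl]
  constructor
  · rw [Complex.div_ofReal_re, Complex.add_re, Complex.ofReal_re, hre0, add_zero]
    exact hbound
  · rw [Complex.div_ofReal_re, Complex.sub_re, Complex.ofReal_re, hre0, sub_zero]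
    exact hbound
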